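/- arXiv:2509.14334 — 2 statements merged into one kernel-verified Lean document; each statement's English description precedes it below -/
import Mathlib

section
/- For every integer n ≥ 1, the sequence α_n = (∑_{j=0}^{n-1} r_j²) − log(n)/π satisfies 1 ≤ α_n ≤ 1 + 1/π. -/
open Real

noncomputable def r (n : ℕ) : ℝ := (Nat.choose (2 * n) n : ℝ) / 4 ^ n

noncomputable def α (n : ℕ) : ℝ := (∑ j ∈ Finset.range n, (r j) ^ 2) - Real.log n / π

/-! By Wallis' product, `(n + c) * r n ^ 2 → 1 / π` for every constant `c`. The recursion
`r (n + 1) = r n * (2n + 1) / (2n + 2)` shows that `n * r n ^ 2` increases and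
`(n + 1/3) * r n ^ 2` decreases, so `1 / (π (n + 1/3)) ≤ r n ^ 2 ≤ 1 / (π n)`.
As `log (n + 1) - log n ≤ 1 / (n + 1/3)` (from `log x ≤ sinh (log x)`), the lower bound makes `α`
nondecreasing from `α 1 = 1`; the upper bound gives
`∑_{j ≤ n} r j ^ 2 ≤ 1 + H_n / π ≤ 1 + (1 + log n) / π`. -/

open Filter Finset
open scoped Nat Topology

namespace Real

theorem log_le_half_sub_inv {x : ℝ} (hx : 1 ≤ x) : log x ≤ (x - x⁻¹) / 2 := by
  have h := self_le_sinh_iff.mpr (log_nonneg hx)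
  rwa [sinh_eq, exp_neg, exp_log (by positivity)] at h

theorem log_add_one_sub_log_le {x : ℝ} (hx : 1 ≤ x) : log (x + 1) - log x ≤ 1 / (x + 1 / 3) := by
  have hx0 : 0 < x := by linarith
  rw [← log_div (by positivity) hx0.ne']
  calc log ((x + 1) / x) ≤ ((x + 1) / x - ((x + 1) / x)⁻¹) / 2 :=
        log_le_half_sub_inv ((one_le_div hx0).mpr (by linarith))
    _ ≤ 1 / (x + 1 / 3) := by
        rw [inv_div, div_sub_div _ _ hx0.ne' (by positivity), div_div,
          div_le_div_iff₀ (by positivity) (by positivity)]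
        nlinarith

end Real

lemma r_zero : r 0 = 1 := by simp [r]

lemma r_succ (n : ℕ) : r (n + 1) = r n * ((2 * n + 1) / (2 * n + 2)) := by
  have h : ((n + 1 : ℕ) : ℝ) * Nat.centralBinom (n + 1) = 2 * (2 * n + 1) * Nat.centralBinom n := by
    exact_mod_cast Nat.succ_mul_centralBinom_succ n
  simp only [r, ← Nat.centralBinom_eq_two_mul_choose] at h ⊢
  push_cast at h
  rw [div_mul_div_comm, div_eq_div_iff (by positivity) (by positivity), pow_succ]
  linear_combination (2 * (4 : ℝ) ^ n) * h

lemma two_mul_add_one_mul_r_sq (n : ℕ) : (2 * n + 1) * r n ^ 2 = (Wallis.W n)⁻¹ := by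
  have h : ((2 * n).choose n : ℝ) * n ! * n ! = (2 * n)! := by
    have := Nat.choose_mul_factorial_mul_factorial (Nat.le_mul_of_pos_left n two_pos)
    rw [show 2 * n - n = n by omega] at this
    exact_mod_cast this
  rw [Wallis.W_eq_factorial_ratio, inv_div, r, ← h, show (2 : ℝ) ^ (4 * n) = 4 ^ n * 4 ^ n by
    rw [← mul_pow, pow_mul]; norm_num]
  field_simp

lemma tendsto_add_mul_r_sq (c : ℝ) :
    Tendsto (fun n : ℕ => (n + c) * r n ^ 2) atTop (𝓝 (1 / π)) := by
  have hfrac : Tendsto (fun n : ℕ => (n + c) / (2 * n + 1)) atTop (𝓝 (1 / 2)) := by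
    have hc : Tendsto (fun n : ℕ => c / (2 * n + 1)) atTop (𝓝 0) :=
      tendsto_const_nhds.div_atTop <| tendsto_atTop_add_const_right _ _ <|
        tendsto_natCast_atTop_atTop.const_mul_atTop two_pos
    simpa [add_div] using Stirling.tendsto_self_div_two_mul_self_add_one.add hc
  have hW := Wallis.tendsto_W_nhds_pi_div_two.inv₀ pi_div_two_pos.ne'
  convert hfrac.mul hW using 1
  · ext n
    rw [← two_mul_add_one_mul_r_sq]
    field_simp
  · field_simp

lemma monotone_mul_r_sq : Monotone (fun n : ℕ => n * r n ^ 2) := by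
  refine monotone_nat_of_le_succ fun n => ?_
  have hfactor : (n : ℝ) ≤ (n + 1) * ((2 * n + 1) / (2 * n + 2)) ^ 2 := by
    rw [div_pow, mul_div_assoc', le_div_iff₀ (by positivity)]
    nlinarith
  calc (n : ℝ) * r n ^ 2 ≤ (n + 1) * ((2 * n + 1) / (2 * n + 2)) ^ 2 * r n ^ 2 := by gcongr
    _ = (n + 1 : ℕ) * r (n + 1) ^ 2 := by rw [r_succ]; push_cast; ring

lemma antitone_add_third_mul_r_sq : Antitone (fun n : ℕ => (n + 1 / 3) * r n ^ 2) := by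
  refine antitone_nat_of_succ_le fun n => ?_
  have hfactor : (n + 1 + 1 / 3) * ((2 * n + 1) / (2 * n + 2)) ^ 2 ≤ (n : ℝ) + 1 / 3 := by
    rw [div_pow, mul_div_assoc', div_le_iff₀ (by positivity)]
    nlinarith
  calc ((n + 1 : ℕ) + 1 / 3) * r (n + 1) ^ 2
      = (n + 1 + 1 / 3) * ((2 * n + 1) / (2 * n + 2)) ^ 2 * r n ^ 2 := by
        rw [r_succ]; push_cast; ring
    _ ≤ (n + 1 / 3) * r n ^ 2 := by gcongr

lemma mul_r_sq_le (n : ℕ) : n * r n ^ 2 ≤ 1 / π :=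
  monotone_mul_r_sq.ge_of_tendsto (by simpa using tendsto_add_mul_r_sq 0) n

lemma le_add_third_mul_r_sq (n : ℕ) : 1 / π ≤ (n + 1 / 3) * r n ^ 2 :=
  antitone_add_third_mul_r_sq.le_of_tendsto (tendsto_add_mul_r_sq (1 / 3)) n

lemma α_one : α 1 = 1 := by simp [α, r_zero]

lemma α_le_α_succ {n : ℕ} (hn : 1 ≤ n) : α n ≤ α (n + 1) := by
  have hstep : (log (n + 1) - log n) / π ≤ r n ^ 2 := by
    have hr := le_add_third_mul_r_sq n
    rw [div_le_iff₀ pi_pos] at hr ⊢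
    calc log (n + 1) - log n ≤ 1 / (n + 1 / 3) := log_add_one_sub_log_le (by exact_mod_cast hn)
      _ ≤ r n ^ 2 * π := by rw [div_le_iff₀ (by positivity)]; linarith
  have hα : α (n + 1) = α n + (r n ^ 2 - (log (n + 1) - log n) / π) := by
    rw [α, α, sum_range_succ, Nat.cast_succ]
    ring
  linarith

lemma one_le_α {n : ℕ} (hn : 1 ≤ n) : 1 ≤ α n := by
  induction n, hn using Nat.le_induction with
  | base => exact α_one.ge
  | succ n hn ih => exact ih.trans (α_le_α_succ hn)

lemma sum_range_succ_r_sq_le (n : ℕ) : ∑ j ∈ range (n + 1), r j ^ 2 ≤ 1 + harmonic n / π := by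
  have hterm (i : ℕ) : r (i + 1) ^ 2 ≤ ((i : ℝ) + 1)⁻¹ / π := by
    have := mul_r_sq_le (i + 1)
    push_cast at this
    rw [le_div_iff₀ pi_pos] at this
    field_simp
    linarith
  rw [sum_range_succ', r_zero, one_pow, add_comm, harmonic, Rat.cast_sum, sum_div]
  gcongr with i
  push_cast
  exact hterm i

lemma α_le_one_add_one_div_pi (n : ℕ) : α n ≤ 1 + 1 / π := by
  cases n with
  | zero =>
    simp only [α, range_zero, sum_empty, Nat.cast_zero, log_zero, zero_div, sub_zero]
    positivity
  | succ n =>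
    have hlog : log n ≤ log (n + 1 : ℕ) := by
      rcases n.eq_zero_or_pos with rfl | hn
      · simp
      · exact log_le_log (by positivity) (by push_cast; linarith)
    calc α (n + 1) ≤ 1 + harmonic n / π - log (n + 1 : ℕ) / π :=
          sub_le_sub_right (sum_range_succ_r_sq_le n) _
      _ ≤ 1 + (1 + log n) / π - log (n + 1 : ℕ) / π := by gcongr; exact harmonic_le_one_add_log n
      _ ≤ 1 + 1 / π := by rw [← sub_nonneg]; field_simp; linarith

theorem alpha_bounds (n : ℕ) (hn : 1 ≤ n) : 1 ≤ α n ∧ α n ≤ 1 + 1 / π :=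
  ⟨one_le_α hn, α_le_one_add_one_div_pi n⟩
end

section
/- As n → ∞, ((n+1)/(2n²)) ∑_{j=1}^{n} 1/sin((2j−1)π/(2n)) = log(n)/π + (log(8/π) + γ)/π + o(1). -/
/-!
Write `1 / sin x = 1 / x + 1 / (π - x) + h x`, where `h = cscRegularPart` is continuous on
`[0, π]`. At the midpoints `xₖ = (2k + 1)π / (2n)` the two poles contribute
`(4n / π) ∑_{k<n} 1 / (2k + 1) = (4n / π) (H_{2n} - H_n / 2)`, which is
`(2n / π) (log n + 2 log 2 + γ) + o(n)`, while `∑ₖ h xₖ` is `n / π` times a midpoint Riemann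
sum of `h`. Finally `∫₀^π h = 2 log (2 / π)`: a primitive of `h` is
`log (tan (x / 2) (π - x) / x)`, which tends to `log (π / 2)` at `0` and is odd under `x ↦ π - x`.
-/

open Real Filter Set Topology

lemma abs_intervalIntegral_sub_mul_le {f : ℝ → ℝ} {u v c ε : ℝ} (huv : u ≤ v)
    (hf : IntervalIntegrable f MeasureTheory.volume u v)
    (hfc : ∀ x ∈ Icc u v, |f x - c| ≤ ε) :
    |(∫ x in u..v, f x) - (v - u) * c| ≤ ε * (v - u) := by
  have hbound : ∀ x ∈ uIoc u v, ‖f x - c‖ ≤ ε := fun x hx =>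
    hfc x (Ioc_subset_Icc_self (by rwa [uIoc_of_le huv] at hx))
  have := intervalIntegral.norm_integral_le_of_norm_le_const hbound
  rwa [intervalIntegral.integral_sub hf intervalIntegrable_const, intervalIntegral.integral_const,
    smul_eq_mul, abs_of_nonneg (sub_nonneg.2 huv), Real.norm_eq_abs] at this

lemma abs_riemannSum_sub_integral_le {f : ℝ → ℝ} {a b δ η : ℝ} (hab : a ≤ b)
    (hf : IntervalIntegrable f MeasureTheory.volume a b)
    (hfδ : ∀ x ∈ Icc a b, ∀ y ∈ Icc a b, dist x y ≤ δ → dist (f x) (f y) ≤ η)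
    {n : ℕ} (hn : n ≠ 0) (hnδ : (b - a) / n ≤ δ) {ξ : ℕ → ℝ}
    (hξ : ∀ k < n, ξ k ∈ Icc (a + k * ((b - a) / n)) (a + (k + 1) * ((b - a) / n))) :
    |(b - a) / n * ∑ k ∈ Finset.range n, f (ξ k) - ∫ x in a..b, f x| ≤ η * (b - a) := by
  have hn0 : (0 : ℝ) < n := Nat.cast_pos.2 (Nat.pos_of_ne_zero hn)
  set h := (b - a) / n with h_def
  set x : ℕ → ℝ := fun k => a + k * h with x_def
  have hx_mem : ∀ k ≤ n, x k ∈ Icc a b := fun k hk => by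
    have hk' : (k : ℝ) ≤ n := by exact_mod_cast hk
    refine ⟨le_add_of_nonneg_right (by positivity), ?_⟩
    calc x k ≤ a + n * h := by simp only [x_def]; gcongr
      _ = b := by rw [h_def]; field_simp; ring
  have hcell_sub : ∀ k < n, Icc (x k) (x (k + 1)) ⊆ Icc a b := fun k hk =>
    Icc_subset_Icc (hx_mem k hk.le).1 (hx_mem (k + 1) hk).2
  have hwidth : ∀ k, x (k + 1) - x k = h := fun k => by simp only [x_def]; push_cast; ring
  have hx_le : ∀ k, x k ≤ x (k + 1) := fun k => by
    linarith [hwidth k, div_nonneg (sub_nonneg.2 hab) hn0.le]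
  have hint : ∀ k < n, IntervalIntegrable f MeasureTheory.volume (x k) (x (k + 1)) := fun k hk =>
    hf.mono_set (by rw [uIcc_of_le hab, uIcc_of_le (hx_le k)]; exact hcell_sub k hk)
  have hcell : ∀ k < n, |(∫ t in x k..x (k + 1), f t) - h * f (ξ k)| ≤ η * h := by
    intro k hk
    have hξk : ξ k ∈ Icc (x k) (x (k + 1)) := by simpa [x_def] using hξ k hk
    rw [← hwidth k]
    refine abs_intervalIntegral_sub_mul_le (hx_le k) (hint k hk) fun t ht => ?_
    rw [← Real.dist_eq]
    refine hfδ _ (hcell_sub k hk ht) _ (hcell_sub k hk hξk) ?_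
    rw [Real.dist_eq, abs_le]
    constructor <;> linarith [ht.1, ht.2, hξk.1, hξk.2, hwidth k]
  have hsum : ∫ t in a..b, f t = ∑ k ∈ Finset.range n, ∫ t in x k..x (k + 1), f t := by
    have hx0 : x 0 = a := by simp [x_def]
    have hxn : x n = b := by simp only [x_def, h_def]; field_simp; ring
    rw [intervalIntegral.sum_integral_adjacent_intervals hint, hx0, hxn]
  calc |(b - a) / n * ∑ k ∈ Finset.range n, f (ξ k) - ∫ t in a..b, f t|
      = |∑ k ∈ Finset.range n, ((∫ t in x k..x (k + 1), f t) - h * f (ξ k))| := by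
        rw [abs_sub_comm, hsum, Finset.mul_sum, ← Finset.sum_sub_distrib]
    _ ≤ ∑ k ∈ Finset.range n, |(∫ t in x k..x (k + 1), f t) - h * f (ξ k)| :=
        Finset.abs_sum_le_sum_abs _ _
    _ ≤ ∑ _k ∈ Finset.range n, η * h :=
        Finset.sum_le_sum fun k hk => hcell k (Finset.mem_range.1 hk)
    _ = η * (b - a) := by
        rw [Finset.sum_const, Finset.card_range, nsmul_eq_mul, h_def]; field_simp

lemma tendsto_riemannSum_of_continuousOn {f : ℝ → ℝ} {a b : ℝ} (hab : a ≤ b)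
    (hf : ContinuousOn f (Icc a b)) (ξ : ℕ → ℕ → ℝ)
    (hξ : ∀ n k : ℕ, k < n →
      ξ n k ∈ Icc (a + k * ((b - a) / n)) (a + (k + 1) * ((b - a) / n))) :
    Tendsto (fun n : ℕ => (b - a) / n * ∑ k ∈ Finset.range n, f (ξ n k)) atTop
      (𝓝 (∫ x in a..b, f x)) := by
  rw [Metric.tendsto_atTop]
  intro ε hε
  have hη : 0 < ε / (b - a + 1) := div_pos hε (by linarith)
  obtain ⟨δ, hδ, hfδ⟩ := Metric.uniformContinuousOn_iff_le.mp
    (isCompact_Icc.uniformContinuousOn_of_continuous hf) _ hη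
  obtain ⟨N, hN⟩ := exists_nat_gt ((b - a) / δ)
  refine ⟨N + 1, fun n hn => ?_⟩
  have hn0 : (0 : ℝ) < n := by exact_mod_cast (Nat.succ_pos N).trans_le hn
  have hnδ : (b - a) / n ≤ δ := by
    have hNn : (N : ℝ) + 1 ≤ n := by exact_mod_cast hn
    rw [div_le_iff₀ hn0]
    nlinarith [(div_lt_iff₀ hδ).1 hN]
  calc dist ((b - a) / n * ∑ k ∈ Finset.range n, f (ξ n k)) (∫ x in a..b, f x)
      ≤ ε / (b - a + 1) * (b - a) :=
        abs_riemannSum_sub_integral_le hab (hf.intervalIntegrable_of_Icc hab) hfδ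
          (Nat.cast_pos.1 hn0).ne' hnδ (hξ n)
    _ < ε := by
        rw [div_mul_eq_mul_div, div_lt_iff₀ (by linarith)]
        nlinarith

lemma tendsto_inv_sin_sub_inv_nhdsGT_zero :
    Tendsto (fun x => 1 / sin x - 1 / x) (𝓝[>] 0) (𝓝 0) := by
  have hsin : ∀ x, 0 < x → x < 1 → 5 / 6 * x < sin x := fun x hx0 hx1 => by
    nlinarith [sin_gt_sub_cube hx0, mul_pos (mul_pos hx0 hx0) (sub_pos.2 hx1),
      mul_pos hx0 (sub_pos.2 hx1)]
  refine squeeze_zero' ?_ ?_ (tendsto_id.mono_left nhdsWithin_le_nhds)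
  all_goals filter_upwards [Ioo_mem_nhdsGT one_pos] with x ⟨hx0, hx1⟩
  · exact sub_nonneg.2 (one_div_le_one_div_of_le (by linarith [hsin x hx0 hx1]) (sin_lt hx0).le)
  · have hsinx := hsin x hx0 hx1
    rw [id, div_sub_div _ _ (by linarith) hx0.ne', div_le_iff₀ (by nlinarith)]
    nlinarith [sin_gt_sub_cube hx0, mul_lt_mul_of_pos_left hsinx (mul_pos hx0 hx0)]

/-- With Lean's `1 / 0 = 0` this takes the value `-1 / π` at `0` and `π`, so it is already the
continuous extension there. -/
noncomputable def cscRegularPart (x : ℝ) : ℝ := 1 / sin x - 1 / x - 1 / (π - x)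

lemma cscRegularPart_pi_sub (x : ℝ) : cscRegularPart (π - x) = cscRegularPart x := by
  simp only [cscRegularPart, sin_pi_sub, sub_sub_cancel]
  ring

lemma continuousWithinAt_cscRegularPart_zero : ContinuousWithinAt cscRegularPart (Ici 0) 0 := by
  rw [← continuousWithinAt_Ioi_iff_Ici, ContinuousWithinAt]
  have hvalue : cscRegularPart 0 = 0 - 1 / (π - 0) := by simp [cscRegularPart]
  rw [hvalue]
  refine tendsto_inv_sin_sub_inv_nhdsGT_zero.sub (Tendsto.mono_left ?_ nhdsWithin_le_nhds)
  exact (continuousAt_const.div (continuous_sub_left π).continuousAt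
    (by simp [pi_ne_zero])).tendsto

lemma continuousOn_cscRegularPart : ContinuousOn cscRegularPart (Icc 0 π) := by
  have h0 : ContinuousWithinAt cscRegularPart (Icc 0 π) 0 :=
    continuousWithinAt_cscRegularPart_zero.mono Icc_subset_Ici_self
  intro x ⟨hx0, hxπ⟩
  rcases hx0.eq_or_lt with rfl | hx0
  · exact h0
  rcases hxπ.eq_or_lt with rfl | hxπ
  · have hreflect : MapsTo (fun y => π - y) (Icc 0 π) (Icc 0 π) :=
      fun y hy => ⟨by linarith [hy.2], by linarith [hy.1]⟩
    have := h0.comp_of_eq (continuous_sub_left π).continuousWithinAt hreflect (sub_self π)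
    simpa [Function.comp_def, cscRegularPart_pi_sub] using this
  · have hsin : sin x ≠ 0 := (sin_pos_of_pos_of_lt_pi hx0 hxπ).ne'
    have hπx : π - x ≠ 0 := sub_ne_zero.2 hxπ.ne'
    exact (((continuousAt_const.div continuous_sin.continuousAt hsin).sub
      (continuousAt_const.div continuousAt_id hx0.ne')).sub
      (continuousAt_const.div (continuous_sub_left π).continuousAt hπx)).continuousWithinAt

lemma hasDerivAt_log_tan_half {x : ℝ} (hx : sin x ≠ 0) :
    HasDerivAt (fun y => log (tan (y / 2))) (1 / sin x) x := by
  have hsin2 : sin x = 2 * sin (x / 2) * cos (x / 2) := by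
    rw [← sin_two_mul, mul_div_cancel₀ x two_ne_zero]
  have hs : sin (x / 2) ≠ 0 := fun h => hx (by rw [hsin2, h]; ring)
  have hc : cos (x / 2) ≠ 0 := fun h => hx (by rw [hsin2, h]; ring)
  have htan : tan (x / 2) ≠ 0 := by rw [tan_eq_sin_div_cos]; exact div_ne_zero hs hc
  have hd : HasDerivAt (fun y => tan (y / 2)) (1 / cos (x / 2) ^ 2 * (1 / 2)) x :=
    HasDerivAt.comp (h₂ := tan) x (Real.hasDerivAt_tan hc) ((hasDerivAt_id' x).div_const 2)
  convert hd.log htan using 1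
  rw [tan_eq_sin_div_cos, hsin2]
  field_simp

lemma tendsto_tan_half_div_nhdsNE_zero :
    Tendsto (fun x => tan (x / 2) / x) (𝓝[≠] 0) (𝓝 (1 / 2)) := by
  have hderiv : HasDerivAt (fun y => tan (y / 2)) (1 / 2) 0 := by
    simpa [Function.comp_def] using (Real.hasDerivAt_tan (x := (0 : ℝ) / 2) (by simp)).comp
      (0 : ℝ) ((hasDerivAt_id' (0 : ℝ)).div_const 2)
  simpa [slope_fun_def_field] using hasDerivAt_iff_tendsto_slope.mp hderiv

noncomputable def cscRegularPartPrimitive (x : ℝ) : ℝ :=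
  log (tan (x / 2)) - log x + log (π - x)

lemma hasDerivAt_cscRegularPartPrimitive {x : ℝ} (hx : x ∈ Ioo 0 π) :
    HasDerivAt cscRegularPartPrimitive (cscRegularPart x) x := by
  have hπx : π - x ≠ 0 := sub_ne_zero.2 hx.2.ne'
  have : HasDerivAt (fun y => log (tan (y / 2)) - log y + log (π - y))
      (1 / sin x - x⁻¹ + -1 / (π - x)) x :=
    ((hasDerivAt_log_tan_half (sin_pos_of_mem_Ioo hx).ne').sub (hasDerivAt_log hx.1.ne')).add
      (((hasDerivAt_id' x).const_sub π).log hπx)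
  refine this.congr_deriv ?_
  simp only [cscRegularPart]
  ring

lemma cscRegularPartPrimitive_pi_sub (x : ℝ) :
    cscRegularPartPrimitive (π - x) = -cscRegularPartPrimitive x := by
  simp only [cscRegularPartPrimitive, sub_sub_cancel,
    show (π - x) / 2 = π / 2 - x / 2 by ring, tan_pi_div_two_sub, log_inv]
  ring

lemma tendsto_cscRegularPartPrimitive_nhdsGT_zero :
    Tendsto cscRegularPartPrimitive (𝓝[>] 0) (𝓝 (log (π / 2))) := by
  have hprod :
      Tendsto (fun x => tan (x / 2) / x * (π - x)) (𝓝[>] 0) (𝓝 (1 / 2 * (π - 0))) :=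
    (tendsto_tan_half_div_nhdsNE_zero.mono_left (nhdsWithin_mono _ fun _ h => ne_of_gt h)).mul
      ((continuous_sub_left π).tendsto 0 |>.mono_left nhdsWithin_le_nhds)
  rw [show π / 2 = 1 / 2 * (π - 0) by ring]
  refine (hprod.log (by simp [pi_ne_zero])).congr' ?_
  filter_upwards [Ioo_mem_nhdsGT pi_pos] with x ⟨hx0, hxπ⟩
  have htan : 0 < tan (x / 2) := tan_pos_of_pos_of_lt_pi_div_two (by linarith) (by linarith)
  rw [cscRegularPartPrimitive, log_mul (div_pos htan hx0).ne' (by linarith),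
    log_div htan.ne' hx0.ne']

lemma tendsto_cscRegularPartPrimitive_nhdsLT_pi :
    Tendsto cscRegularPartPrimitive (𝓝[<] π) (𝓝 (-log (π / 2))) := by
  have hreflect : Tendsto (fun x => π - x) (𝓝[<] π) (𝓝[>] 0) := by
    refine tendsto_nhdsWithin_of_tendsto_nhds_of_eventually_within _ ?_ ?_
    · simpa using ((continuous_sub_left π).tendsto π).mono_left nhdsWithin_le_nhds
    · filter_upwards [self_mem_nhdsWithin] with x hx using sub_pos.2 (mem_Iio.1 hx)
  have := (tendsto_cscRegularPartPrimitive_nhdsGT_zero.comp hreflect).neg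
  simpa [Function.comp_def, cscRegularPartPrimitive_pi_sub] using this

lemma integral_cscRegularPart : ∫ x in 0..π, cscRegularPart x = 2 * log (2 / π) := by
  rw [intervalIntegral.integral_eq_sub_of_hasDerivAt_of_tendsto pi_pos
    (fun x hx => hasDerivAt_cscRegularPartPrimitive hx)
    (continuousOn_cscRegularPart.intervalIntegrable_of_Icc pi_pos.le)
    tendsto_cscRegularPartPrimitive_nhdsGT_zero tendsto_cscRegularPartPrimitive_nhdsLT_pi,
    ← inv_div, log_inv]
  ring

lemma sum_range_inv_two_mul_add_one (n : ℕ) :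
    ∑ k ∈ Finset.range n, 1 / (2 * (k : ℝ) + 1) = harmonic (2 * n) - harmonic n / 2 := by
  induction n with
  | zero => simp
  | succ n ih =>
    rw [Finset.sum_range_succ, ih, show 2 * (n + 1) = 2 * n + 1 + 1 by ring,
      harmonic_succ, harmonic_succ, harmonic_succ]
    push_cast
    field_simp
    ring

lemma tendsto_sum_range_inv_two_mul_add_one_sub_log :
    Tendsto (fun n : ℕ => ∑ k ∈ Finset.range n, 1 / (2 * (k : ℝ) + 1) - log n / 2) atTop
      (𝓝 (log 2 + eulerMascheroniConstant / 2)) := by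
  have h2n : Tendsto (fun n : ℕ => 2 * n) atTop atTop := tendsto_id.const_mul_atTop' two_pos
  have hlim := ((tendsto_harmonic_sub_log.comp h2n).sub
    (tendsto_harmonic_sub_log.div_const 2)).add_const (log 2)
  rw [show log 2 + eulerMascheroniConstant / 2
    = eulerMascheroniConstant - eulerMascheroniConstant / 2 + log 2 by ring]
  refine hlim.congr' ?_
  filter_upwards [eventually_ne_atTop 0] with n hn
  rw [Function.comp_apply, sum_range_inv_two_mul_add_one, Nat.cast_mul, Nat.cast_two,
    log_mul two_ne_zero (Nat.cast_ne_zero.2 hn)]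
  ring

lemma sum_range_inv_sin_eq {n : ℕ} (hn : n ≠ 0) :
    ∑ k ∈ Finset.range n, 1 / sin ((2 * k + 1) * π / (2 * n))
      = 4 * n / π * ∑ k ∈ Finset.range n, 1 / (2 * (k : ℝ) + 1)
        + ∑ k ∈ Finset.range n, cscRegularPart ((2 * k + 1) * π / (2 * n)) := by
  have hn' : (n : ℝ) ≠ 0 := Nat.cast_ne_zero.2 hn
  have hpoles : ∀ k : ℕ,
      1 / ((2 * k + 1) * π / (2 * n)) = 2 * n / π * (1 / (2 * (k : ℝ) + 1)) :=
    fun k => by field_simp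
  have hreflect : ∀ k ∈ Finset.range n,
      π - (2 * k + 1) * π / (2 * n) = (2 * ((n - 1 - k : ℕ) : ℝ) + 1) * π / (2 * n) := by
    intro k hk
    rw [Nat.cast_sub (by have := Finset.mem_range.1 hk; omega), Nat.cast_sub (by omega)]
    field_simp
    ring
  have hsplit : ∀ x, 1 / sin x = cscRegularPart x + 1 / x + 1 / (π - x) := fun x => by
    rw [cscRegularPart]; ring
  simp_rw [hsplit, Finset.sum_add_distrib]
  rw [Finset.sum_congr rfl fun k hk => congrArg (1 / ·) (hreflect k hk),
    Finset.sum_range_reflect (fun k => 1 / ((2 * (k : ℝ) + 1) * π / (2 * n))) n]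
  simp_rw [hpoles, ← Finset.mul_sum]
  ring

lemma tendsto_sum_cscRegularPart_midpoints :
    Tendsto (fun n : ℕ =>
      π / n * ∑ k ∈ Finset.range n, cscRegularPart ((2 * k + 1) * π / (2 * n)))
      atTop (𝓝 (2 * log (2 / π))) := by
  have hmid : ∀ n k : ℕ, k < n → (2 * k + 1) * π / (2 * n)
      ∈ Icc (0 + k * ((π - 0) / n)) (0 + (k + 1) * ((π - 0) / n)) := by
    intro n k hk
    have hn : (0 : ℝ) < n := by exact_mod_cast (Nat.zero_le k).trans_lt hk
    simp only [zero_add, sub_zero, ← mul_div_assoc, mem_Icc]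
    constructor <;> rw [div_le_div_iff₀ (by positivity) (by positivity)] <;> nlinarith [pi_pos]
  have := tendsto_riemannSum_of_continuousOn pi_pos.le continuousOn_cscRegularPart _ hmid
  rwa [integral_cscRegularPart, sub_zero] at this

lemma tendsto_sum_range_inv_sin_div_sub_log :
    Tendsto (fun n : ℕ =>
      (∑ k ∈ Finset.range n, 1 / sin ((2 * k + 1) * π / (2 * n))) / (2 * n) - log n / π)
      atTop (𝓝 ((log (8 / π) + eulerMascheroniConstant) / π)) := by
  have hlim := (tendsto_sum_range_inv_two_mul_add_one_sub_log.const_mul (2 / π)).add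
    (tendsto_sum_cscRegularPart_midpoints.div_const (2 * π))
  have hC : (log (8 / π) + eulerMascheroniConstant) / π
      = 2 / π * (log 2 + eulerMascheroniConstant / 2) + 2 * log (2 / π) / (2 * π) := by
    rw [show (8 : ℝ) / π = 2 ^ 2 * (2 / π) by ring, log_mul (by norm_num) (by positivity),
      log_pow]
    field_simp
    ring
  rw [hC]
  refine hlim.congr' ?_
  filter_upwards [eventually_ne_atTop 0] with n hn
  have hn' : (n : ℝ) ≠ 0 := Nat.cast_ne_zero.2 hn
  rw [sum_range_inv_sin_eq hn]
  field_simp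
  ring

theorem mathias_lower_bound_asymptotic :
    Tendsto (fun n : ℕ =>
        (((n : ℝ) + 1) / (2 * (n : ℝ) ^ 2)) *
            ∑ j ∈ Finset.Icc 1 n, 1 / Real.sin ((2 * (j : ℝ) - 1) * π / (2 * n)) -
          (Real.log n / π + (Real.log (8 / π) + Real.eulerMascheroniConstant) / π))
      atTop (nhds 0) := by
  set C := (log (8 / π) + eulerMascheroniConstant) / π
  set Q : ℕ → ℝ := fun n =>
    (∑ k ∈ Finset.range n, 1 / sin ((2 * k + 1) * π / (2 * n))) / (2 * n) - log n / π
  have hQ : Tendsto Q atTop (𝓝 C) := tendsto_sum_range_inv_sin_div_sub_log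
  have hlog : Tendsto (fun n : ℕ => log n / n) atTop (𝓝 0) :=
    isLittleO_log_id_atTop.tendsto_div_nhds_zero.comp tendsto_natCast_atTop_atTop
  have hlim : Tendsto (fun n : ℕ => (Q n - C) + Q n / n + log n / n / π) atTop (𝓝 0) := by
    simpa using ((hQ.sub_const C).add (hQ.div_atTop tendsto_natCast_atTop_atTop)).add
      (hlog.div_const π)
  refine hlim.congr' ?_
  filter_upwards [eventually_ne_atTop 0] with n hn
  have hIcc : ∑ j ∈ Finset.Icc 1 n, 1 / sin ((2 * (j : ℝ) - 1) * π / (2 * n))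
      = ∑ k ∈ Finset.range n, 1 / sin ((2 * k + 1) * π / (2 * n)) := by
    rw [← Finset.Ico_add_one_right_eq_Icc, Finset.sum_Ico_eq_sum_range, Nat.add_sub_cancel]
    refine Finset.sum_congr rfl fun k _ => ?_
    push_cast
    ring_nf
  have hn' : (n : ℝ) ≠ 0 := Nat.cast_ne_zero.2 hn
  rw [hIcc]
  simp only [Q]
  generalize ∑ k ∈ Finset.range n, 1 / sin ((2 * (k : ℝ) + 1) * π / (2 * n)) = S
  field_simp
  ring
end
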